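/- arXiv:1912.01883 — 5 statements merged into one kernel-verified Lean document; each statement's English description precedes it below -/
import Mathlib

section
/- Let P = {(a,0) : a ∈ ℤ, 1 ≤ a ≤ m} and Q = {(i, √j) : i,j ∈ ℤ, 1 ≤ i ≤ s, s²+1−i² ≤ j ≤ s²+ms−i²} where s = √(n/m) is an integer and m ≤ s. Then every distance between a point of P and a point of Q has square equal to an integer in the interval [m² − 2ms + s² + 1, m² − 2m + s² + ms]; consequently the number of distinct distances between P and Q is at most 3ms. -/
noncomputable def pt (x y : ℝ) : EuclideanSpace ℝ (Fin 2) :=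
  (EuclideanSpace.equiv (Fin 2) ℝ).symm ![x, y]

/-- In Elekes' circle grid construction, every squared distance between `P` and `Q`
is an integer in `[m² − 2ms + s² + 1, m² − 2m + s² + ms]`, hence there are at most
`3ms` distinct distances. -/
theorem stmt_1 (m s n : ℤ) (hm : 2 ≤ m) (hms : m ≤ s) (hn : n = m * s ^ 2) :
    (∀ a i j : ℤ, 1 ≤ a → a ≤ m → 1 ≤ i → i ≤ s →
      s ^ 2 + 1 - i ^ 2 ≤ j → j ≤ s ^ 2 + m * s - i ^ 2 →
      (dist (pt (a : ℝ) 0) (pt (i : ℝ) (Real.sqrt (j : ℝ)))) ^ 2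
          = (((a - i) ^ 2 + j : ℤ) : ℝ) ∧
      m ^ 2 - 2 * m * s + s ^ 2 + 1 ≤ (a - i) ^ 2 + j ∧
      (a - i) ^ 2 + j ≤ m ^ 2 - 2 * m + s ^ 2 + m * s) ∧
    ({ d : ℝ | ∃ a i j : ℤ, 1 ≤ a ∧ a ≤ m ∧ 1 ≤ i ∧ i ≤ s ∧
        s ^ 2 + 1 - i ^ 2 ≤ j ∧ j ≤ s ^ 2 + m * s - i ^ 2 ∧
        d = dist (pt (a : ℝ) 0) (pt (i : ℝ) (Real.sqrt (j : ℝ)))}.Finite ∧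
      (({ d : ℝ | ∃ a i j : ℤ, 1 ≤ a ∧ a ≤ m ∧ 1 ≤ i ∧ i ≤ s ∧
        s ^ 2 + 1 - i ^ 2 ≤ j ∧ j ≤ s ^ 2 + m * s - i ^ 2 ∧
        d = dist (pt (a : ℝ) 0) (pt (i : ℝ) (Real.sqrt (j : ℝ)))}.ncard : ℤ)
        ≤ 3 * m * s)) := by
  have key : ∀ a i j : ℤ, 1 ≤ a → a ≤ m → 1 ≤ i → i ≤ s →
      s ^ 2 + 1 - i ^ 2 ≤ j → j ≤ s ^ 2 + m * s - i ^ 2 →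
      (dist (pt (a : ℝ) 0) (pt (i : ℝ) (Real.sqrt (j : ℝ)))) ^ 2
          = (((a - i) ^ 2 + j : ℤ) : ℝ) ∧
      m ^ 2 - 2 * m * s + s ^ 2 + 1 ≤ (a - i) ^ 2 + j ∧
      (a - i) ^ 2 + j ≤ m ^ 2 - 2 * m + s ^ 2 + m * s := by
    intro a i j ha1 ham hi1 his hj1 hj2
    have hj0 : (0:ℤ) ≤ j := by nlinarith
    refine ⟨?_, by nlinarith, by nlinarith⟩
    have hsq : Real.sqrt (j:ℝ) ^ 2 = (j:ℝ) := Real.sq_sqrt (by exact_mod_cast hj0)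
    have c0 : ∀ x y : ℝ, pt x y 0 = x := fun x y => rfl
    have c1 : ∀ x y : ℝ, pt x y 1 = y := fun x y => rfl
    rw [EuclideanSpace.dist_eq, Real.sq_sqrt (by positivity)]
    simp only [Fin.sum_univ_two, Real.dist_eq, c0, c1, sq_abs]
    push_cast
    nlinarith [hsq]
  refine ⟨key, ?_⟩
  set lo := m ^ 2 - 2 * m * s + s ^ 2 + 1 with hlo
  set hi := m ^ 2 - 2 * m + s ^ 2 + m * s with hhi
  have hsub : { d : ℝ | ∃ a i j : ℤ, 1 ≤ a ∧ a ≤ m ∧ 1 ≤ i ∧ i ≤ s ∧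
        s ^ 2 + 1 - i ^ 2 ≤ j ∧ j ≤ s ^ 2 + m * s - i ^ 2 ∧
        d = dist (pt (a : ℝ) 0) (pt (i : ℝ) (Real.sqrt (j : ℝ)))}
      ⊆ (fun k : ℤ => Real.sqrt (k : ℝ)) '' (Set.Icc lo hi) := by
    rintro d ⟨a, i, j, ha1, ham, hi1, his, hj1, hj2, rfl⟩
    obtain ⟨h1, h2, h3⟩ := key a i j ha1 ham hi1 his hj1 hj2
    refine ⟨(a - i) ^ 2 + j, ⟨h2, h3⟩, ?_⟩
    simp only
    rw [← h1, Real.sqrt_sq dist_nonneg]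
  have hfin : ((fun k : ℤ => Real.sqrt (k : ℝ)) '' (Set.Icc lo hi)).Finite :=
    (Set.finite_Icc lo hi).image _
  refine ⟨hfin.subset hsub, ?_⟩
  have h1 := Set.ncard_le_ncard hsub hfin
  have h2 := Set.ncard_image_le (s := Set.Icc lo hi)
    (f := fun k : ℤ => Real.sqrt (k : ℝ)) (Set.finite_Icc lo hi)
  have h3 : (Set.Icc lo hi).ncard = (hi + 1 - lo).toNat := by
    rw [← Finset.coe_Icc, Set.ncard_coe_finset, Int.card_Icc]
  have h4 : ((hi + 1 - lo).toNat : ℤ) ≤ 3 * m * s := by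
    rw [Int.toNat_of_nonneg (by nlinarith)]
    nlinarith
  have := le_trans h1 h2
  rw [h3] at this
  calc (_ : ℤ) ≤ ((hi + 1 - lo).toNat : ℤ) := by exact_mod_cast this
    _ ≤ 3 * m * s := h4
end

section
/- In Elekes' circle grid construction with P = {(a,0) : 1 ≤ a ≤ m} and Q = {(i,√j) : 1 ≤ i ≤ s, s²+1−i² ≤ j ≤ s²+ms−i²} with s = √(n/m) ≥ m ≥ 2, the single point (1,0) ∈ P attains at least ms distinct distances to points of Q; hence D(P,Q) ≥ √(mn). -/
lemma dist_pt (x y x' y' : ℝ) :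
    dist (pt x y) (pt x' y') = Real.sqrt ((x - x') ^ 2 + (y - y') ^ 2) := by
  rw [EuclideanSpace.dist_eq]
  simp [pt, Fin.sum_univ_two, Real.dist_eq, sq_abs]

/-- In Elekes' construction, the point `(1,0)` attains at least `ms` distinct
distances to `Q`; hence `D(P,Q) ≥ √(mn)`. -/
theorem stmt_2 (m s n : ℤ) (hm : 2 ≤ m) (hms : m ≤ s) (hn : n = m * s ^ 2)
    (P Q : Set (EuclideanSpace ℝ (Fin 2)))
    (hPdef : P = {x | ∃ a : ℤ, 1 ≤ a ∧ a ≤ m ∧ x = pt (a : ℝ) 0})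
    (hQdef : Q = {x | ∃ i j : ℤ, 1 ≤ i ∧ i ≤ s ∧
      s ^ 2 + 1 - i ^ 2 ≤ j ∧ j ≤ s ^ 2 + m * s - i ^ 2 ∧
      x = pt (i : ℝ) (Real.sqrt (j : ℝ))}) :
    m * s ≤ ({d : ℝ | ∃ q ∈ Q, d = dist (pt 1 0) q}.ncard : ℤ) ∧
    Real.sqrt ((m : ℝ) * (n : ℝ))
      ≤ (({d : ℝ | ∃ p ∈ P, ∃ q ∈ Q, d = dist p q}.ncard : ℤ) : ℝ) := by
  have hs2 : (2:ℤ) ≤ s := le_trans hm hms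
  have hms0 : (0:ℤ) ≤ m * s := by positivity
  set S1 : Set ℝ := {d : ℝ | ∃ q ∈ Q, d = dist (pt 1 0) q} with hS1
  set S2 : Set ℝ := {d : ℝ | ∃ p ∈ P, ∃ q ∈ Q, d = dist p q} with hS2
  -- Q is finite
  have hQfin : Q.Finite := by
    apply Set.Finite.subset (Set.Finite.image
      (fun p : ℤ × ℤ => pt (p.1 : ℝ) (Real.sqrt (p.2 : ℝ)))
      (Set.finite_Icc ((1:ℤ), s ^ 2 + 1 - s ^ 2) (s, s ^ 2 + m * s - 1)))
    rintro x hx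
    rw [hQdef] at hx
    obtain ⟨i, j, h1, h2, h3, h4, rfl⟩ := hx
    refine ⟨(i, j), ?_, rfl⟩
    have hi2 : i ^ 2 ≤ s ^ 2 := by nlinarith
    have hi1 : (1:ℤ) ≤ i ^ 2 := by nlinarith
    simp only [Set.mem_Icc, Prod.mk_le_mk]
    exact ⟨⟨h1, by omega⟩, ⟨h2, by omega⟩⟩
  have hPfin : P.Finite := by
    apply Set.Finite.subset (Set.Finite.image
      (fun a : ℤ => pt (a : ℝ) 0) (Set.finite_Icc (1:ℤ) m))
    rintro x hx
    rw [hPdef] at hx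
    obtain ⟨a, h1, h2, rfl⟩ := hx
    exact ⟨a, Set.mem_Icc.2 ⟨h1, h2⟩, rfl⟩
  have hS2fin : S2.Finite := by
    apply Set.Finite.subset (Set.Finite.image (fun pq => dist pq.1 pq.2)
      (hPfin.prod hQfin))
    rintro d ⟨p, hp, q, hq, rfl⟩
    exact ⟨(p, q), ⟨hp, hq⟩, rfl⟩
  have h10 : pt 1 0 ∈ P := by
    rw [hPdef]; exact ⟨1, le_refl _, by omega, by norm_num⟩
  have hS1sub : S1 ⊆ S2 := by
    rintro d ⟨q, hq, rfl⟩
    exact ⟨pt 1 0, h10, q, hq, rfl⟩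
  have hS1fin : S1.Finite := hS2fin.subset hS1sub
  -- main lower bound
  have key : m * s ≤ (S1.ncard : ℤ) := by
    have hsub : (fun j : ℤ => Real.sqrt (j : ℝ)) '' (Set.Icc (s ^ 2) (s ^ 2 + m * s - 1)) ⊆ S1 := by
      rintro d ⟨j, hj, rfl⟩
      rw [Set.mem_Icc] at hj
      refine ⟨pt 1 (Real.sqrt (j : ℝ)), ?_, ?_⟩
      · rw [hQdef]
        exact ⟨1, j, le_refl _, by omega, by push_cast; omega, by push_cast; omega, by norm_num⟩
      · rw [dist_pt]
        have hj0 : (0:ℝ) ≤ (j : ℝ) := by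
          have : (0:ℤ) ≤ j := by nlinarith [hj.1]
          exact_mod_cast this
        rw [show ((1:ℝ) - 1) ^ 2 + (0 - Real.sqrt (j:ℝ)) ^ 2 = Real.sqrt (j:ℝ) ^ 2 by ring,
          Real.sqrt_sq (Real.sqrt_nonneg _)]
    have hinj : Set.InjOn (fun j : ℤ => Real.sqrt (j : ℝ))
        (Set.Icc (s ^ 2) (s ^ 2 + m * s - 1)) := by
      intro a ha b hb hab
      rw [Set.mem_Icc] at ha hb
      have ha0 : (0:ℝ) ≤ (a : ℝ) := by exact_mod_cast show (0:ℤ) ≤ a by nlinarith [ha.1]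
      have hb0 : (0:ℝ) ≤ (b : ℝ) := by exact_mod_cast show (0:ℤ) ≤ b by nlinarith [hb.1]
      have := (Real.sqrt_inj ha0 hb0).1 hab
      exact_mod_cast this
    have hcard : ((fun j : ℤ => Real.sqrt (j : ℝ)) ''
        (Set.Icc (s ^ 2) (s ^ 2 + m * s - 1))).ncard = (m * s).toNat := by
      rw [Set.ncard_image_of_injOn hinj, ← Finset.coe_Icc, Set.ncard_coe_finset,
        Int.card_Icc]
      congr 1
      omega
    have hle := Set.ncard_le_ncard hsub hS1fin
    rw [hcard] at hle
    omega
  refine ⟨key, ?_⟩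
  have key2 : m * s ≤ (S2.ncard : ℤ) :=
    le_trans key (by exact_mod_cast Set.ncard_le_ncard hS1sub hS2fin)
  have : Real.sqrt ((m : ℝ) * (n : ℝ)) = ((m * s : ℤ) : ℝ) := by
    rw [hn]
    push_cast
    rw [show (m:ℝ) * ((m:ℝ) * (s:ℝ) ^ 2) = ((m:ℝ) * s) ^ 2 by ring,
      Real.sqrt_sq (by positivity)]
  rw [this]
  exact_mod_cast key2
end

section
/- For all p, q, r ∈ ℝ² with q ≠ r, the lines ℓ_{p,q} and ℓ_{p,r} in ℝ³ are skew: they neither intersect nor are parallel. -/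
/-- The line `ℓ_{p,q} ⊂ ℝ³`. -/
def lpq (p q : ℝ × ℝ) : Set (ℝ × ℝ × ℝ) :=
  {v | ∃ t : ℝ, v = ((p.1 + q.1) / 2 + t * (q.2 - p.2) / 2,
                     (p.2 + q.2) / 2 + t * (p.1 - q.1) / 2, t)}

/-- For `q ≠ r`, the lines `ℓ_{p,q}` and `ℓ_{p,r}` are skew: they do not intersect
and their directions are not parallel. -/
theorem stmt_7 (p q r : ℝ × ℝ) (hqr : q ≠ r) :
    lpq p q ∩ lpq p r = ∅ ∧
    ¬ ∃ c : ℝ, ((q.2 - p.2) / 2, (p.1 - q.1) / 2, (1 : ℝ))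
      = c • ((r.2 - p.2) / 2, (p.1 - r.1) / 2, (1 : ℝ)) := by
  constructor
  · ext v
    simp only [Set.mem_inter_iff, Set.mem_empty_iff_false, iff_false, lpq,
      Set.mem_setOf_eq, not_and]
    rintro ⟨t, rfl⟩ ⟨s, hs⟩
    rw [Prod.ext_iff, Prod.ext_iff] at hs
    obtain ⟨h1, h2, h3⟩ := hs
    simp only at h1 h2 h3
    subst h3
    apply hqr
    have key : (1 + t^2) * (q.2 - r.2) = 0 := by linear_combination 2*h2 + 2*t*h1
    have hq2 : q.2 = r.2 := by
      have ht : (1 : ℝ) + t^2 > 0 := by positivity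
      have := mul_eq_zero.mp key
      rcases this with h | h
      · linarith
      · linarith
    rw [hq2] at h1
    have hq1 : q.1 = r.1 := by linarith
    exact Prod.ext hq1 hq2
  · rintro ⟨c, hc⟩
    rw [Prod.ext_iff, Prod.ext_iff] at hc
    obtain ⟨h1, h2, h3⟩ := hc
    simp only [Prod.smul_fst, Prod.smul_snd, smul_eq_mul, mul_one] at h1 h2 h3
    subst h3
    apply hqr
    have hq2 : q.2 = r.2 := by linarith
    have hq1 : q.1 = r.1 := by linarith
    exact Prod.ext hq1 hq2
end

section
/- For all p, q, r ∈ ℝ² with q ≠ r, the lines ℓ_{q,p} and ℓ_{r,p} in ℝ³ are skew. -/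
/-- For `q ≠ r`, the lines `ℓ_{q,p}` and `ℓ_{r,p}` are skew: they do not intersect
and their directions are not parallel. -/
theorem stmt_8 (p q r : ℝ × ℝ) (hqr : q ≠ r) :
    lpq q p ∩ lpq r p = ∅ ∧
    ¬ ∃ c : ℝ, ((p.2 - q.2) / 2, (q.1 - p.1) / 2, (1 : ℝ))
      = c • ((p.2 - r.2) / 2, (r.1 - p.1) / 2, (1 : ℝ)) := by
  constructor
  · ext v
    simp only [Set.mem_inter_iff, lpq, Set.mem_setOf_eq, Set.mem_empty_iff_false, iff_false,
      not_and]
    rintro ⟨t, rfl⟩ ⟨s, hs⟩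
    rw [Prod.mk.injEq, Prod.mk.injEq] at hs
    obtain ⟨h1, h2, h3⟩ := hs
    subst h3
    have key : (1 + t ^ 2) * (q.1 - r.1) = 0 := by linear_combination 2 * h1 + 2 * t * h2
    have ht : (1 + t ^ 2) > 0 := by positivity
    have hq1 : q.1 = r.1 := by
      have := mul_eq_zero.mp key
      rcases this with h | h
      · linarith
      · linarith
    have hq2 : q.2 = r.2 := by linear_combination 2 * h2 - t * hq1
    exact hqr (Prod.ext hq1 hq2)
  · rintro ⟨c, hc⟩
    rw [Prod.smul_mk, Prod.smul_mk, Prod.mk.injEq, Prod.mk.injEq] at hc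
    obtain ⟨h1, h2, h3⟩ := hc
    simp only [smul_eq_mul, mul_one] at h1 h2 h3
    subst h3
    have hq1 : q.1 = r.1 := by linarith
    have hq2 : q.2 = r.2 := by linarith
    exact hqr (Prod.ext hq1 hq2)
end

section
/- Let p, q ∈ ℝ² and r > 0, and let a ∈ ℝ² with d(q,a) = r. Define b = p + q − a (so that p − b = a − q). Then for every x ∈ ℝ² with d(p,x) = r and x ≠ b, the lines ℓ_{p,a} and ℓ_{x,q} in ℝ³ intersect, while ℓ_{p,a} and ℓ_{b,q} do not intersect. -/
/-!
A point of `ℓ_{p,q}` is determined by its height `t`, so two such lines meet iff the planar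
points at some common height `t` agree: for `ℓ_{p,a}` and `ℓ_{x,q}` this says
`u = t • J w` with `u = p + a - x - q`, `w = b - x` and `J` the rotation by `-π/2`.
Since `d(p,x) = d(q,a)`, the vectors `u` and `w` are orthogonal, and in the plane a vector
orthogonal to `w ≠ 0` is a multiple of `J w`. For `x = b` we get `w = 0`, so the lines meet only
if `u = 2 (a - q) = 0`, which `d(q,a) = r > 0` rules out.
-/

lemma lpq_inter_nonempty_iff (p q p' q' : ℝ × ℝ) :
    (lpq p q ∩ lpq p' q').Nonempty ↔ ∃ t : ℝ,
      p.1 + q.1 - p'.1 - q'.1 = t * (p.2 + q'.2 - q.2 - p'.2) ∧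
      p.2 + q.2 - p'.2 - q'.2 = -t * (p.1 + q'.1 - q.1 - p'.1) := by
  constructor
  · rintro ⟨v, ⟨t, rfl⟩, ⟨s, hs⟩⟩
    simp only [Prod.mk.injEq] at hs
    obtain ⟨h1, h2, rfl⟩ := hs
    exact ⟨t, by linear_combination 2 * h1, by linear_combination 2 * h2⟩
  · rintro ⟨t, h1, h2⟩
    refine ⟨_, ⟨t, rfl⟩, ⟨t, ?_⟩⟩
    simp only [Prod.mk.injEq, and_true]
    exact ⟨by linear_combination h1 / 2, by linear_combination h2 / 2⟩

lemma exists_eq_mul_perp_of_orthogonal {u₁ u₂ w₁ w₂ : ℝ} (hw : w₁ ≠ 0 ∨ w₂ ≠ 0)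
    (h : u₁ * w₁ + u₂ * w₂ = 0) : ∃ t : ℝ, u₁ = t * w₂ ∧ u₂ = -t * w₁ := by
  have hn : w₁ ^ 2 + w₂ ^ 2 ≠ 0 := by rcases hw with hw | hw <;> positivity
  refine ⟨(u₁ * w₂ - u₂ * w₁) / (w₁ ^ 2 + w₂ ^ 2), ?_, ?_⟩
  · field_simp
    linear_combination w₁ * h
  · field_simp
    linear_combination w₂ * h

/-- Let `d(q,a) = r > 0` and `b = p + q − a`. For every `x` with `d(p,x) = r` and
`x ≠ b`, the lines `ℓ_{p,a}` and `ℓ_{x,q}` intersect, while `ℓ_{p,a}` and `ℓ_{b,q}`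
do not. -/
theorem stmt_18 (p q a : ℝ × ℝ) (r : ℝ) (hr : 0 < r)
    (ha : (q.1 - a.1) ^ 2 + (q.2 - a.2) ^ 2 = r ^ 2)
    (b : ℝ × ℝ) (hb : b = (p.1 + q.1 - a.1, p.2 + q.2 - a.2)) :
    (∀ x : ℝ × ℝ, (p.1 - x.1) ^ 2 + (p.2 - x.2) ^ 2 = r ^ 2 → x ≠ b →
      (lpq p a ∩ lpq x q).Nonempty) ∧
    lpq p a ∩ lpq b q = ∅ := by
  subst hb
  constructor
  · intro x hx hxb
    have hw : p.1 + q.1 - a.1 - x.1 ≠ 0 ∨ p.2 + q.2 - a.2 - x.2 ≠ 0 := by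
      by_contra! hw
      exact hxb (Prod.ext (by linarith [hw.1]) (by linarith [hw.2]))
    exact (lpq_inter_nonempty_iff p a x q).mpr
      (exists_eq_mul_perp_of_orthogonal hw (by linear_combination hx - ha))
  · refine Set.not_nonempty_iff_eq_empty.mp fun hne => ?_
    obtain ⟨t, h1, h2⟩ := (lpq_inter_nonempty_iff p a _ q).mp hne
    have e1 : q.1 - a.1 = 0 := by linear_combination -h1 / 2
    have e2 : q.2 - a.2 = 0 := by linear_combination -h2 / 2
    have hr2 : r ^ 2 = 0 := by linear_combination -ha + (q.1 - a.1) * e1 + (q.2 - a.2) * e2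
    exact (pow_ne_zero 2 hr.ne') hr2
end
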